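/- arXiv:2505.20478 — 2 statements merged into one kernel-verified Lean document; each statement's English description precedes it below -/
import Mathlib

section
/- If Z is a chi-square random variable with p degrees of freedom, then for all t > 0, P(Z ≥ p + 2√(pt) + 2t) ≤ e^{-t} and P(Z ≤ p − 2√(pt)) ≤ e^{-t}. -/
/-!
Chernoff's bound with the moment generating function `E e^{sZ} = (1 - 2s)^{-p/2}` of
`Z ~ χ²_p`, taken at `s = (1 - 1/r)/2`, bounds both `P(Z ≥ p r)` (for `r ≥ 1`) and
`P(Z ≤ p r)` (for `r ≤ 1`) by `exp (-(p/2) (r - 1 - log r))`. With `w = √(t/p)`, the levels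
`r = 1 + 2w + 2w²` and `r = 1 - 2w` have rate `r - 1 - log r ≥ 2w²`, because
`log (1 + 2w + 2w²) ≤ 2w` and `log (1 - 2w) ≤ -2w - 2w²`; hence both tails are at most
`e^{-p w²} = e^{-t}`.
-/

open MeasureTheory ProbabilityTheory Real

-- For `s ≥ 1/2` both sides are `0`: the integral of a non-integrable function and `√` of a
-- nonpositive number.
lemma integral_exp_mul_sq_gaussianReal (s : ℝ) :
    ∫ x, exp (s * x ^ 2) ∂gaussianReal 0 1 = (√(1 - 2 * s))⁻¹ := by
  have hpdf (x : ℝ) : gaussianPDFReal 0 1 x • exp (s * x ^ 2)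
      = (√(2 * π))⁻¹ * exp (-(1 / 2 - s) * x ^ 2) := by
    rw [gaussianPDFReal_def, smul_eq_mul, mul_assoc, ← exp_add, NNReal.coe_one]
    ring_nf
  rw [integral_gaussianReal_eq_integral_smul one_ne_zero]
  simp_rw [hpdf]
  rw [integral_const_mul, integral_gaussian, ← sqrt_inv, ← sqrt_mul (by positivity),
    ← sqrt_inv]
  congr 1
  field_simp [pi_pos.ne']

lemma mgf_sq_of_map_eq_gaussianReal {Ω : Type*} [MeasurableSpace Ω] {μ : Measure Ω}
    {X : Ω → ℝ} (hX : μ.map X = gaussianReal 0 1) (s : ℝ) :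
    mgf (fun ω => X ω ^ 2) μ s = (√(1 - 2 * s))⁻¹ := by
  have hXm : AEMeasurable X μ := aemeasurable_of_map_neZero (by rw [hX]; infer_instance)
  rw [mgf, ← integral_exp_mul_sq_gaussianReal s, ← hX,
    integral_map hXm (by fun_prop)]

lemma log_one_add_two_mul_add_two_mul_sq_le {w : ℝ} (hw : 0 ≤ w) :
    log (1 + 2 * w + 2 * w ^ 2) ≤ 2 * w := by
  rw [log_le_iff_le_exp (by positivity)]
  linarith [quadratic_le_exp_of_nonneg (by positivity : 0 ≤ 2 * w)]

lemma log_one_sub_le_neg_sub_sq_div_two {x : ℝ} (hx0 : 0 ≤ x) (hx1 : x < 1) :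
    log (1 - x) ≤ -x - x ^ 2 / 2 := by
  have hseries := hasSum_pow_div_log_of_abs_lt_one (abs_lt.2 ⟨by linarith, hx1⟩)
  have := sum_le_hasSum (Finset.range 2) (fun n _ => by positivity) hseries
  norm_num [Finset.sum_range_succ] at this
  linarith

section ChiSquared

variable {Ω ι : Type*} [MeasurableSpace Ω] {μ : Measure Ω} [Fintype ι] {X : ι → Ω → ℝ}

lemma mgf_sum_sq_of_iIndepFun (hindep : iIndepFun X μ)
    (hlaw : ∀ i, μ.map (X i) = gaussianReal 0 1) (s : ℝ) :
    mgf (fun ω => ∑ i, X i ω ^ 2) μ s = (√(1 - 2 * s))⁻¹ ^ Fintype.card ι := by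
  have hXm (i : ι) : AEMeasurable (X i) μ :=
    aemeasurable_of_map_neZero (by rw [hlaw i]; infer_instance)
  have hsq : iIndepFun (fun i ω => X i ω ^ 2) μ :=
    hindep.comp (fun _ x => x ^ 2) (fun _ => by fun_prop)
  have := hsq.mgf_sum₀ (fun i => (hXm i).pow_const 2) Finset.univ (t := s)
  simp_rw [Finset.sum_fn] at this
  rw [this, Finset.prod_congr rfl fun i _ => mgf_sq_of_map_eq_gaussianReal (hlaw i) s,
    Finset.prod_const, Finset.card_univ]

lemma integrable_exp_mul_sum_sq (hindep : iIndepFun X μ)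
    (hlaw : ∀ i, μ.map (X i) = gaussianReal 0 1) {s : ℝ} (hs : s < 1 / 2) :
    Integrable (fun ω => exp (s * ∑ i, X i ω ^ 2)) μ := by
  refine .of_integral_ne_zero ?_
  change mgf (fun ω => ∑ i, X i ω ^ 2) μ s ≠ 0
  rw [mgf_sum_sq_of_iIndepFun hindep hlaw]
  have : 0 < 1 - 2 * s := by linarith
  positivity

lemma exp_mul_inv_sqrt_pow_eq (n : ℕ) {r : ℝ} (hr : 0 < r) :
    exp (-((1 - r⁻¹) / 2) * (n * r)) * (√(1 - 2 * ((1 - r⁻¹) / 2)))⁻¹ ^ n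
      = exp (-(n / 2) * (r - 1 - log r)) := by
  have hsqrt : (√(1 - 2 * ((1 - r⁻¹) / 2)))⁻¹ = exp (log r / 2) := by
    rw [show 1 - 2 * ((1 - r⁻¹) / 2) = r⁻¹ by ring, sqrt_inv, inv_inv, sqrt_eq_rpow,
      rpow_def_of_pos hr]
    ring_nf
  rw [hsqrt, ← exp_nat_mul, ← exp_add]
  congr 1
  field_simp
  ring

lemma measure_sum_sq_ge_card_mul_le (hindep : iIndepFun X μ)
    (hlaw : ∀ i, μ.map (X i) = gaussianReal 0 1) {r : ℝ} (hr : 1 ≤ r) :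
    μ {ω | Fintype.card ι * r ≤ ∑ i, X i ω ^ 2}
      ≤ ENNReal.ofReal (exp (-(Fintype.card ι / 2) * (r - 1 - log r))) := by
  have := hindep.isProbabilityMeasure
  have hr0 : 0 < r := by linarith
  have hs0 : 0 ≤ (1 - r⁻¹) / 2 := by
    have := inv_le_one_of_one_le₀ hr
    linarith
  have hs : (1 - r⁻¹) / 2 < 1 / 2 := by
    have := inv_pos.2 hr0
    linarith
  rw [← ofReal_measureReal]
  refine ENNReal.ofReal_le_ofReal ?_
  calc μ.real {ω | Fintype.card ι * r ≤ ∑ i, X i ω ^ 2}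
      ≤ exp (-((1 - r⁻¹) / 2) * (Fintype.card ι * r))
          * mgf (fun ω => ∑ i, X i ω ^ 2) μ ((1 - r⁻¹) / 2) :=
        measure_ge_le_exp_mul_mgf _ hs0 (integrable_exp_mul_sum_sq hindep hlaw hs)
    _ = _ := by rw [mgf_sum_sq_of_iIndepFun hindep hlaw, exp_mul_inv_sqrt_pow_eq _ hr0]

lemma measure_sum_sq_le_card_mul_le (hindep : iIndepFun X μ)
    (hlaw : ∀ i, μ.map (X i) = gaussianReal 0 1) {r : ℝ} (hr0 : 0 < r) (hr : r ≤ 1) :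
    μ {ω | ∑ i, X i ω ^ 2 ≤ Fintype.card ι * r}
      ≤ ENNReal.ofReal (exp (-(Fintype.card ι / 2) * (r - 1 - log r))) := by
  have := hindep.isProbabilityMeasure
  have hs0 : (1 - r⁻¹) / 2 ≤ 0 := by
    have := one_le_inv₀ hr0 |>.2 hr
    linarith
  rw [← ofReal_measureReal]
  refine ENNReal.ofReal_le_ofReal ?_
  calc μ.real {ω | ∑ i, X i ω ^ 2 ≤ Fintype.card ι * r}
      ≤ exp (-((1 - r⁻¹) / 2) * (Fintype.card ι * r))
          * mgf (fun ω => ∑ i, X i ω ^ 2) μ ((1 - r⁻¹) / 2) :=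
        measure_le_le_exp_mul_mgf _ hs0
          (integrable_exp_mul_sum_sq hindep hlaw (by linarith))
    _ = _ := by rw [mgf_sum_sq_of_iIndepFun hindep hlaw, exp_mul_inv_sqrt_pow_eq _ hr0]

lemma measure_sum_sq_upper_deviation_le (hindep : iIndepFun X μ)
    (hlaw : ∀ i, μ.map (X i) = gaussianReal 0 1) {w : ℝ} (hw : 0 ≤ w) :
    μ {ω | Fintype.card ι * (1 + 2 * w + 2 * w ^ 2) ≤ ∑ i, X i ω ^ 2}
      ≤ ENNReal.ofReal (exp (-(Fintype.card ι * w ^ 2))) := by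
  refine (measure_sum_sq_ge_card_mul_le hindep hlaw (by nlinarith)).trans
    (ENNReal.ofReal_le_ofReal (exp_le_exp.2 ?_))
  have := log_one_add_two_mul_add_two_mul_sq_le hw
  have hn : (0 : ℝ) ≤ Fintype.card ι := Nat.cast_nonneg _
  nlinarith

lemma measure_sum_sq_lower_deviation_le (hindep : iIndepFun X μ)
    (hlaw : ∀ i, μ.map (X i) = gaussianReal 0 1) {w : ℝ} (hw : 0 ≤ w) :
    μ {ω | ∑ i, X i ω ^ 2 ≤ Fintype.card ι * (1 - 2 * w)}
      ≤ ENNReal.ofReal (exp (-(Fintype.card ι * w ^ 2))) := by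
  have hn : (0 : ℝ) ≤ Fintype.card ι := Nat.cast_nonneg _
  rcases lt_or_ge (2 * w) 1 with hw1 | hw1
  · refine (measure_sum_sq_le_card_mul_le hindep hlaw (by linarith) (by linarith)).trans
      (ENNReal.ofReal_le_ofReal (exp_le_exp.2 ?_))
    have := log_one_sub_le_neg_sub_sq_div_two (by positivity) hw1
    nlinarith
  · -- the level `n (1 - 2w)` is `≤ 0`, so any `r > 0` with `r - 1 - log r ≥ 2w²` will do
    set r := exp (-1 - 2 * w ^ 2)
    have hr0 : 0 < r := exp_pos _
    have hr1 : r ≤ 1 := exp_le_one_iff.2 (by nlinarith)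
    have hsub : {ω | ∑ i, X i ω ^ 2 ≤ Fintype.card ι * (1 - 2 * w)}
        ⊆ {ω | ∑ i, X i ω ^ 2 ≤ Fintype.card ι * r} :=
      fun ω hω => hω.trans <|
        (mul_nonpos_of_nonneg_of_nonpos hn (by linarith)).trans (mul_nonneg hn hr0.le)
    refine (measure_mono hsub).trans <| (measure_sum_sq_le_card_mul_le hindep hlaw hr0 hr1).trans
      (ENNReal.ofReal_le_ofReal (exp_le_exp.2 ?_))
    rw [log_exp]
    nlinarith

end ChiSquared

theorem chi_square_tail_bounds_general
    {Ω : Type*} [MeasureSpace Ω]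
    (p : ℕ) (hp : 0 < p) (X : Fin p → Ω → ℝ)
    (hindep : iIndepFun X ℙ)
    (hlaw : ∀ i, Measure.map (X i) ℙ = gaussianReal 0 1)
    (Z : Ω → ℝ) (hZ : ∀ ω, Z ω = ∑ i, X i ω ^ 2) :
    ∀ t : ℝ, 0 < t →
      ℙ {ω | (p : ℝ) + 2 * Real.sqrt (p * t) + 2 * t ≤ Z ω} ≤ ENNReal.ofReal (Real.exp (-t)) ∧
      ℙ {ω | Z ω ≤ (p : ℝ) - 2 * Real.sqrt (p * t)} ≤ ENNReal.ofReal (Real.exp (-t)) := by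
  intro t ht
  obtain rfl : Z = fun ω => ∑ i, X i ω ^ 2 := funext hZ
  have hp' : (0 : ℝ) < p := Nat.cast_pos.2 hp
  set w := √(t / p)
  have hw : 0 ≤ w := sqrt_nonneg _
  have ht_eq : t = p * w ^ 2 := by rw [sq_sqrt (by positivity)]; field_simp
  have hsqrt : √(p * t) = p * w := by
    rw [ht_eq, show (p : ℝ) * (p * w ^ 2) = (p * w) ^ 2 by ring, sqrt_sq (by positivity)]
  have upper := measure_sum_sq_upper_deviation_le hindep hlaw hw
  have lower := measure_sum_sq_lower_deviation_le hindep hlaw hw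
  rw [Fintype.card_fin, ← ht_eq] at upper lower
  constructor
  · convert upper using 5
    rw [hsqrt, ht_eq]
    ring
  · convert lower using 5
    rw [hsqrt]
    ring

/-- Chi-square tail bounds (Laurent–Massart): if `Z = ∑ i, (X i)²` for `p` i.i.d. standard
Gaussians, then for all `t > 0`,
`P(Z ≥ p + 2√(pt) + 2t) ≤ e^{-t}` and `P(Z ≤ p − 2√(pt)) ≤ e^{-t}`. -/
theorem chi_square_tail_bounds
    {Ω : Type*} [MeasureSpace Ω] [IsProbabilityMeasure (ℙ : Measure Ω)]
    (p : ℕ) (hp : 0 < p) (X : Fin p → Ω → ℝ)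
    (hindep : iIndepFun X ℙ)
    (hlaw : ∀ i, Measure.map (X i) ℙ = gaussianReal 0 1)
    (Z : Ω → ℝ) (hZ : ∀ ω, Z ω = ∑ i, X i ω ^ 2) :
    ∀ t : ℝ, 0 < t →
      ℙ {ω | (p : ℝ) + 2 * Real.sqrt (p * t) + 2 * t ≤ Z ω} ≤ ENNReal.ofReal (Real.exp (-t)) ∧
      ℙ {ω | Z ω ≤ (p : ℝ) - 2 * Real.sqrt (p * t)} ≤ ENNReal.ofReal (Real.exp (-t)) :=
  chi_square_tail_bounds_general p hp X hindep hlaw Z hZ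
end

section
/- Let G₁, ..., G_K partition {1,...,n} with each |G_k| ≥ 1. Suppose Z ∈ ℝ^{n×n} is symmetric positive semidefinite, has Z 𝟙ₙ = 𝟙ₙ, tr(Z) = K, and is block-diagonal with respect to the partition (i.e., Z_{ij} = 0 whenever i ∈ G_k, j ∈ G_l with k ≠ l). Then Z = ∑_{k=1}^K (1/|G_k|) 𝟙_{G_k} 𝟙_{G_k}ᵀ. -/
/-!
With `vₖ = 𝟙_{G_k}` and `S = ∑ₖ vₖ vₖᵀ / |G_k|` the orthogonal projection onto their span,
block-diagonality and `Z 𝟙 = 𝟙` give `Z vₖ = vₖ`, i.e. `Z S = S`. For a PSD `Z` this forces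
`Z - S = (1 - S) Z (1 - S)`, which is PSD; its trace is `K - K = 0`, so `Z = S`.
-/

open Matrix

namespace Matrix

variable {n : Type*} [Fintype n]

/- Taking adjoints, `Z * P = P` gives `P * Z = P`, whence `Z - P = (1 - P)ᴴ * Z * (1 - P)`. -/
lemma PosSemidef.sub_of_mul_eq_right {R : Type*} [Ring R] [PartialOrder R] [StarRing R]
    [DecidableEq n] {Z P : Matrix n n R} (hZ : Z.PosSemidef) (hP : P.IsHermitian)
    (hPP : P * P = P) (hZP : Z * P = P) : (Z - P).PosSemidef := by
  have hPZ : P * Z = P := by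
    simpa only [conjTranspose_mul, hZ.isHermitian.eq, hP.eq] using congrArg (·ᴴ) hZP
  have hconj : (1 - P)ᴴ * Z * (1 - P) = Z - P := by
    simp only [conjTranspose_sub, conjTranspose_one, hP.eq, sub_mul, mul_sub, one_mul, mul_one,
      hZP, hPZ, hPP]
    abel
  exact hconj ▸ hZ.conjTranspose_mul_mul_same (1 - P)

section projOfOrthogonal

variable {κ : Type*} [Fintype κ]

noncomputable def projOfOrthogonal (v : κ → n → ℝ) : Matrix n n ℝ :=
  ∑ k, (v k ⬝ᵥ v k)⁻¹ • vecMulVec (v k) (v k)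

lemma isHermitian_projOfOrthogonal (v : κ → n → ℝ) : (projOfOrthogonal v).IsHermitian := by
  simp [IsHermitian, projOfOrthogonal, transpose_sum, transpose_vecMulVec]

variable {v : κ → n → ℝ}

lemma projOfOrthogonal_mul_self (hv : Pairwise fun k l => v k ⬝ᵥ v l = 0)
    (hv0 : ∀ k, v k ⬝ᵥ v k ≠ 0) : projOfOrthogonal v * projOfOrthogonal v = projOfOrthogonal v := by
  classical
  simp only [projOfOrthogonal, Finset.sum_mul, Finset.mul_sum, smul_mul_smul_comm,
    vecMulVec_mul_vecMulVec]
  refine Finset.sum_congr rfl fun k _ => ?_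
  rw [Finset.sum_eq_single k (fun l _ hlk => by simp [hv hlk]) (by simp)]
  simp [vecMulVec_smul, smul_smul, mul_assoc, inv_mul_cancel₀ (hv0 k)]

lemma mul_projOfOrthogonal {Z : Matrix n n ℝ} (hZv : ∀ k, Z *ᵥ v k = v k) :
    Z * projOfOrthogonal v = projOfOrthogonal v := by
  simp only [projOfOrthogonal, Finset.mul_sum, Matrix.mul_smul, mul_vecMulVec, hZv]

lemma trace_projOfOrthogonal (hv0 : ∀ k, v k ⬝ᵥ v k ≠ 0) :
    (projOfOrthogonal v).trace = Fintype.card κ := by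
  simp [projOfOrthogonal, trace_sum, inv_mul_cancel₀ (hv0 _)]

end projOfOrthogonal

lemma dotProduct_ite_mem {ι R : Type*} [Fintype ι] [DecidableEq ι] [NonAssocSemiring R]
    (s t : Finset ι) :
    (fun i => if i ∈ s then (1 : R) else 0) ⬝ᵥ (fun i => if i ∈ t then 1 else 0) = (s ∩ t).card := by
  simp [dotProduct, Finset.inter_comm]

lemma mulVec_ite_mem_of_blockDiagonal {ι κ R : Type*} [Fintype ι] [DecidableEq ι]
    [NonAssocSemiring R] {Z : Matrix ι ι R} {G : κ → Finset ι} (hcover : ∀ i, ∃ k, i ∈ G k)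
    (hrow : Z *ᵥ (fun _ => (1 : R)) = fun _ => 1)
    (hblock : ∀ k l, k ≠ l → ∀ i ∈ G k, ∀ j ∈ G l, Z i j = 0) (k : κ) :
    (Z *ᵥ fun i => if i ∈ G k then 1 else 0) = fun i => if i ∈ G k then 1 else 0 := by
  funext i
  have hsum : (Z *ᵥ fun j => if j ∈ G k then 1 else 0) i = ∑ j ∈ G k, Z i j := by
    simp [mulVec, dotProduct, Finset.sum_ite_mem]
  rw [hsum]
  split_ifs with hik
  · rw [← congrFun hrow i]
    simp only [mulVec, dotProduct, mul_one]
    refine Finset.sum_subset (Finset.subset_univ _) fun j _ hj => ?_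
    obtain ⟨l, hl⟩ := hcover j
    exact hblock k l (by rintro rfl; exact hj hl) i hik j hl
  · obtain ⟨l, hl⟩ := hcover i
    exact Finset.sum_eq_zero fun j hj => hblock l k (by rintro rfl; exact hik hl) i hl j hj

end Matrix

/-- Uniqueness of the block-diagonal feasible point: if `Z` is symmetric PSD, satisfies
`Z 𝟙ₙ = 𝟙ₙ`, `tr Z = K`, and is block-diagonal with respect to a partition `G₁,…,G_K`
(with each `|G_k| ≥ 1`), then `Z = ∑_k |G_k|⁻¹ 𝟙_{G_k} 𝟙_{G_k}ᵀ`. -/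
theorem sdp_block_diagonal_unique
    (n K : ℕ) (G : Fin K → Finset (Fin n))
    (hne : ∀ k, 1 ≤ (G k).card)
    (hdisj : ∀ k l, k ≠ l → Disjoint (G k) (G l))
    (hcover : ∀ i : Fin n, ∃ k, i ∈ G k)
    (Z : Matrix (Fin n) (Fin n) ℝ)
    (hpsd : Z.PosSemidef)
    (hrow : Z *ᵥ (fun _ => (1 : ℝ)) = fun _ => (1 : ℝ))
    (htr : Z.trace = (K : ℝ))
    (hblock : ∀ k l, k ≠ l → ∀ i ∈ G k, ∀ j ∈ G l, Z i j = 0) :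
    Z = ∑ k, ((G k).card : ℝ)⁻¹ •
      Matrix.vecMulVec (fun i => if i ∈ G k then (1 : ℝ) else 0)
        (fun i => if i ∈ G k then (1 : ℝ) else 0) := by
  set v : Fin K → Fin n → ℝ := fun k i => if i ∈ G k then 1 else 0
  have hcard : ∀ k, v k ⬝ᵥ v k = (G k).card := fun k => by
    simp [v, dotProduct_ite_mem]
  have hv_orth : Pairwise fun k l => v k ⬝ᵥ v l = 0 := fun k l hkl => by
    simp [v, dotProduct_ite_mem, Finset.disjoint_iff_inter_eq_empty.mp (hdisj k l hkl)]
  have hv0 : ∀ k, v k ⬝ᵥ v k ≠ 0 := fun k => by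
    rw [hcard]; exact Nat.cast_ne_zero.mpr (Nat.one_le_iff_ne_zero.mp (hne k))
  have hpsd_sub : (Z - projOfOrthogonal v).PosSemidef :=
    hpsd.sub_of_mul_eq_right (isHermitian_projOfOrthogonal v) (projOfOrthogonal_mul_self hv_orth hv0)
      (mul_projOfOrthogonal (mulVec_ite_mem_of_blockDiagonal hcover hrow hblock))
  have htr_sub : (Z - projOfOrthogonal v).trace = 0 := by
    rw [trace_sub, htr, trace_projOfOrthogonal hv0, Fintype.card_fin, sub_self]
  rw [sub_eq_zero.mp (hpsd_sub.trace_eq_zero_iff.mp htr_sub), projOfOrthogonal]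
  simp_rw [hcard, v]
end
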